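/- arXiv:2605.04612 — 2 statements merged into one kernel-verified Lean document; each statement's English description precedes it below -/
import Mathlib

section
/- In any party-list instance, a committee satisfies EJR+ if and only if it satisfies lower quota. -/
/-!
If some party `p` gets fewer seats than `min (⌊k n_p / n⌋, |p|)`, then with `ℓ = |W ∩ p| + 1`
all supporters of `p` form an `ℓ`-large group agreeing on an unelected candidate of `p`, yet each
of them has only `ℓ - 1` approved winners: EJR+ fails. Conversely, in a party-list instance a
group agreeing on a candidate `c` consists of supporters of the single party `p ∋ c`, so it is
at most `n_p` large, and lower quota gives `p` at least `⌊k n_p / n⌋` seats unless `p ⊆ W`,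
which `c ∉ W` rules out.
-/

open Finset


/-- EJR+: for every `ℓ ∈ [k]`, every candidate `c ∉ W`, and every `ℓ`-large group
`N'` of supporters of `c`, some `i ∈ N'` has `|A_i ∩ W| ≥ ℓ`. -/
def EJRplus (N : Finset ℕ) (A : ℕ → Finset ℕ) (k : ℕ) (W : Finset ℕ) : Prop :=
  ∀ ℓ : ℕ, 1 ≤ ℓ → ℓ ≤ k → ∀ c : ℕ, c ∉ W →
    ∀ N' ⊆ N, (∀ i ∈ N', c ∈ A i) → ℓ * N.card ≤ N'.card * k →
    ∃ i ∈ N', ℓ ≤ (A i ∩ W).card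

/-- `(N, A, C, k)` is a party-list instance with set of parties `P`:
the parties are nonempty, pairwise disjoint, cover `C`, and every voter's
ballot is exactly one party. -/
def IsPartyList (N C : Finset ℕ) (A : ℕ → Finset ℕ) (P : Finset (Finset ℕ)) : Prop :=
  (∀ p ∈ P, p.Nonempty) ∧
  (∀ p ∈ P, ∀ q ∈ P, p ≠ q → Disjoint p q) ∧
  P.biUnion id = C ∧
  ∀ i ∈ N, A i ∈ P

/-- Lower quota on a party-list instance with parties `P`: each party `p` with
`n_p` supporters receives at least `min(⌊k·n_p/n⌋, |p|)` seats. -/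
def LowerQuota (N : Finset ℕ) (A : ℕ → Finset ℕ) (k : ℕ) (P : Finset (Finset ℕ))
    (W : Finset ℕ) : Prop :=
  ∀ p ∈ P, min (k * (N.filter fun i => A i = p).card / N.card) p.card ≤ (W ∩ p).card

theorem EJRplus.lowerQuota {N : Finset ℕ} {A : ℕ → Finset ℕ} {k : ℕ} {W : Finset ℕ}
    (hE : EJRplus N A k W) (P : Finset (Finset ℕ)) : LowerQuota N A k P W := by
  intro p _
  by_contra! hlt
  set Np := N.filter fun i => A i = p
  set ℓ := (W ∩ p).card + 1
  have hℓq : ℓ ≤ k * Np.card / N.card := by omega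
  obtain ⟨c, hcp, hcWp⟩ := exists_mem_notMem_of_card_lt_card (lt_min_iff.mp hlt).2
  have hcW : c ∉ W := fun hcW => hcWp (mem_inter.mpr ⟨hcW, hcp⟩)
  have hNp : Np.card ≤ N.card := card_filter_le _ _
  have hℓk : ℓ ≤ k :=
    hℓq.trans (Nat.div_le_of_le_mul (by rw [mul_comm N.card]; exact Nat.mul_le_mul_left k hNp))
  have hlarge : ℓ * N.card ≤ Np.card * k := by
    rw [mul_comm Np.card]; exact Nat.mul_le_of_le_div _ _ _ hℓq
  obtain ⟨i, hi, hiW⟩ := hE ℓ (by omega) hℓk c hcW Np (filter_subset _ _)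
    (fun i hi => (mem_filter.mp hi).2 ▸ hcp) hlarge
  rw [(mem_filter.mp hi).2, inter_comm] at hiW
  omega

theorem IsPartyList.subset_supporters {N C : Finset ℕ} {A : ℕ → Finset ℕ}
    {P : Finset (Finset ℕ)} (hPL : IsPartyList N C A P) {N' : Finset ℕ} {c i₀ : ℕ}
    (hN' : N' ⊆ N) (hc : ∀ i ∈ N', c ∈ A i) (hi₀ : i₀ ∈ N') :
    N' ⊆ N.filter fun i => A i = A i₀ := by
  obtain ⟨-, hdisj, -, hballot⟩ := hPL
  intro i hi
  refine mem_filter.mpr ⟨hN' hi, ?_⟩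
  by_contra hne
  exact disjoint_left.mp (hdisj _ (hballot i (hN' hi)) _ (hballot i₀ (hN' hi₀)) hne)
    (hc i hi) (hc i₀ hi₀)

theorem LowerQuota.ejrplus {N C : Finset ℕ} {A : ℕ → Finset ℕ} {k : ℕ}
    {P : Finset (Finset ℕ)} {W : Finset ℕ} (hN : N.Nonempty) (hPL : IsPartyList N C A P)
    (hL : LowerQuota N A k P W) : EJRplus N A k W := by
  intro ℓ hℓ _ c hcW N' hN' hc hlarge
  have hN'pos : 0 < N'.card :=
    Nat.pos_of_mul_pos_right ((Nat.mul_pos hℓ hN.card_pos).trans_le hlarge)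
  obtain ⟨i₀, hi₀⟩ := card_pos.mp hN'pos
  set p := A i₀
  have hcp : c ∈ p := hc i₀ hi₀
  have hℓq : ℓ ≤ k * (N.filter fun i => A i = p).card / N.card := by
    rw [Nat.le_div_iff_mul_le hN.card_pos, mul_comm k]
    exact hlarge.trans (Nat.mul_le_mul_right k
      (card_le_card (hPL.subset_supporters hN' hc hi₀)))
  have hWp : (W ∩ p).card < p.card :=
    card_lt_card ⟨inter_subset_right, fun h => hcW (mem_inter.mp (h hcp)).1⟩
  have hq := hL p (hPL.2.2.2 i₀ (hN' hi₀))
  refine ⟨i₀, hi₀, ?_⟩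
  rw [show A i₀ ∩ W = W ∩ p from inter_comm _ _]
  omega

theorem ejrplus_iff_lowerQuota_on_partyList_general
    (N C : Finset ℕ) (A : ℕ → Finset ℕ) (k : ℕ) (P : Finset (Finset ℕ)) (W : Finset ℕ)
    (hN : N.Nonempty) (hPL : IsPartyList N C A P) :
    EJRplus N A k W ↔ LowerQuota N A k P W :=
  ⟨fun hE => hE.lowerQuota P, fun hL => hL.ejrplus hN hPL⟩

/-- On any party-list instance, a committee satisfies EJR+ iff it satisfies lower quota. -/
theorem ejrplus_iff_lowerQuota_on_partyList
    (N C : Finset ℕ) (A : ℕ → Finset ℕ) (k : ℕ) (P : Finset (Finset ℕ)) (W : Finset ℕ)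
    (hN : N.Nonempty) (hPL : IsPartyList N C A P) (hW : W ⊆ C) (hWk : W.card = k) :
    EJRplus N A k W ↔ LowerQuota N A k P W :=
  ejrplus_iff_lowerQuota_on_partyList_general N C A k P W hN hPL
end

section
/- Let f be a lower quota extension with witness function w such that (f, w) is cohesiveness-based and satisfies merge-proofness. Then PJR+ refines f: every committee satisfying PJR+ is selected by f on every instance. -/
open Finset


/-- PJR+: for every `ℓ ∈ [k]`, every candidate `c ∉ W`, and every `ℓ`-large group
`N'` of supporters of `c`, we have `|⋃_{i∈N'}(A_i ∩ W)| ≥ ℓ`. -/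
def PJRplus (N : Finset ℕ) (A : ℕ → Finset ℕ) (k : ℕ) (W : Finset ℕ) : Prop :=
  ∀ ℓ : ℕ, 1 ≤ ℓ → ℓ ≤ k → ∀ c : ℕ, c ∉ W →
    ∀ N' ⊆ N, (∀ i ∈ N', c ∈ A i) → ℓ * N.card ≤ N'.card * k →
    ℓ ≤ (N'.biUnion fun i => A i ∩ W).card

/-- `(N', W)` (with profile `A`) locally embeds into `(N₂', W₂)` (with profile `A₂`):
there are a bijection `φN : N' → N₂'` and an injection
`φC : W ∪ ⋃_{i∈N'} A_i → W₂ ∪ ⋃_{i∈N₂'} A₂_i` mapping `W` onto `W₂` and preserving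
approvals of voters in `N'`. -/
def LocallyEmbeds (N' : Finset ℕ) (A : ℕ → Finset ℕ) (W : Finset ℕ)
    (N₂' : Finset ℕ) (A₂ : ℕ → Finset ℕ) (W₂ : Finset ℕ) : Prop :=
  ∃ φN φC : ℕ → ℕ,
    Set.BijOn φN ↑N' ↑N₂' ∧
    Set.InjOn φC ↑(W ∪ N'.biUnion A) ∧
    Set.MapsTo φC ↑(W ∪ N'.biUnion A) ↑(W₂ ∪ N₂'.biUnion A₂) ∧
    W.image φC = W₂ ∧
    ∀ j ∈ N', ∀ c ∈ W ∪ N'.biUnion A, (c ∈ A j ↔ φC c ∈ A₂ (φN j))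

/-!
Suppose `f` rejects a PJR+ committee `W`, with witness `N'`. By cohesiveness some `c ∉ W` is
approved by all of `N'`, and by merge-proofness `N'` stays a witness when every voter of `N'`
approves exactly `U = ⋃_{i ∈ N'} A_i`. PJR+ applied to `N'` and `c` gives
`|W ∩ U| ≥ ⌊k |N'| / n⌋`. Now build a party-list instance on the same voters: `N'` votes for the
party `U` and everyone else for the party `W \ U` (or also for `U` if `W ⊆ U`). There `W` meets
lower quota, so the lower quota extension `f` accepts it; but `N'`, with its approvals
unchanged, embeds into it, so `N'` is a witness there too.
-/

theorem PJRplus.div_le_card_inter_biUnion {N N' W : Finset ℕ} {A : ℕ → Finset ℕ} {k c : ℕ}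
    (hW : PJRplus N A k W) (hN' : N' ⊆ N) (hcW : c ∉ W) (hcA : ∀ i ∈ N', c ∈ A i) :
    k * N'.card / N.card ≤ (W ∩ N'.biUnion A).card := by
  set ℓ := k * N'.card / N.card
  rcases Nat.eq_zero_or_pos ℓ with hℓ | hℓ
  · simp [hℓ]
  have hℓk : ℓ ≤ k :=
    Nat.div_le_of_le_mul (by rw [mul_comm]; exact Nat.mul_le_mul_right k (card_le_card hN'))
  have hℓN : ℓ * N.card ≤ N'.card * k := mul_comm k N'.card ▸ Nat.div_mul_le_self _ _
  simpa [inter_comm W, biUnion_inter] using hW ℓ hℓ hℓk c hcW N' hN' hcA hℓN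

theorem locallyEmbeds_self_of_eqOn {N' W : Finset ℕ} {A B : ℕ → Finset ℕ}
    (hAB : ∀ i ∈ N', A i = B i) : LocallyEmbeds N' A W N' B W := by
  have hbiUnion : N'.biUnion A = N'.biUnion B := biUnion_congr rfl hAB
  refine ⟨id, id, Set.bijOn_id _, Set.injOn_id _, ?_, image_id, ?_⟩
  · rw [hbiUnion]
    exact Set.mapsTo_id _
  · intro j hj c _
    rw [hAB j hj, id, id]

section PartyList

variable {N N' W U Q : Finset ℕ} {k : ℕ}

theorem isPartyList_const (hU : U.Nonempty) : IsPartyList N U (fun _ => U) {U} := by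
  refine ⟨?_, ?_, by simp, fun _ _ => mem_singleton_self U⟩
  · simpa using hU
  · simp

theorem lowerQuota_const (hWU : W ⊆ U) (hWk : W.card = k) :
    LowerQuota N (fun _ => U) k {U} W := by
  intro p hp
  rw [mem_singleton.mp hp, inter_eq_left.mpr hWU, hWk]
  exact (min_le_left _ _).trans
    (Nat.div_le_of_le_mul (by rw [filter_true_of_mem fun _ _ => rfl, mul_comm]))

theorem isPartyList_ite (hU : U.Nonempty) (hQ : Q.Nonempty) (hUQ : Disjoint U Q) :
    IsPartyList N (U ∪ Q) (fun i => if i ∈ N' then U else Q) {U, Q} := by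
  refine ⟨?_, ?_, by simp, ?_⟩
  · simp [hU, hQ]
  · simp only [mem_insert, mem_singleton]
    rintro p (rfl | rfl) q (rfl | rfl) hpq
    exacts [absurd rfl hpq, hUQ, hUQ.symm, absurd rfl hpq]
  · intro i _
    by_cases hi : i ∈ N' <;> simp [hi]

theorem lowerQuota_ite (hN' : N' ⊆ N) (hUQ : U ≠ Q) (hQW : Q ⊆ W)
    (hquota : k * N'.card / N.card ≤ (W ∩ U).card) :
    LowerQuota N (fun i => if i ∈ N' then U else Q) k {U, Q} W := by
  have hsupporters : N.filter (fun i => (if i ∈ N' then U else Q) = U) = N' := by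
    ext i
    by_cases hi : i ∈ N'
    · simp [hi, hN' hi]
    · simp [hi, hUQ.symm]
  simp only [LowerQuota, mem_insert, mem_singleton]
  rintro p (rfl | rfl)
  · rw [hsupporters]
    exact (min_le_left _ _).trans hquota
  · rw [inter_eq_right.mpr hQW]
    exact min_le_right _ _

theorem exists_partyList_lowerQuota (hN' : N' ⊆ N) (hU : U.Nonempty) (hWk : W.card = k)
    (hquota : k * N'.card / N.card ≤ (W ∩ U).card) :
    ∃ C₂ A₂ P, IsPartyList N C₂ A₂ P ∧ W ⊆ C₂ ∧ LowerQuota N A₂ k P W ∧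
      ∀ i ∈ N', A₂ i = U := by
  by_cases hWU : W ⊆ U
  · exact ⟨U, _, _, isPartyList_const hU, hWU, lowerQuota_const hWU hWk, fun _ _ => rfl⟩
  have hQ : (W \ U).Nonempty := sdiff_nonempty.mpr hWU
  have hUQ : Disjoint U (W \ U) := disjoint_sdiff
  refine ⟨U ∪ W \ U, _, _, isPartyList_ite hU hQ hUQ, by simp,
    lowerQuota_ite hN' (hUQ.ne hU.ne_empty) sdiff_subset hquota, fun i hi => if_pos hi⟩

end PartyList

/-- Let `f` be a lower quota extension with a witness function `w` such that
`(f, w)` is cohesiveness-based and satisfies merge-proofness.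
Then PJR+ refines `f`: every committee satisfying PJR+ is selected by `f`. -/
theorem pjrplus_refines_f
    (f : Finset ℕ → (ℕ → Finset ℕ) → Finset ℕ → ℕ → Finset ℕ → Prop)
    (w : Finset ℕ → (ℕ → Finset ℕ) → Finset ℕ → ℕ → Finset ℕ → Finset ℕ → Prop)
    (hval : ∀ N A C k W N', w N A C k W N' → N'.Nonempty ∧ N' ⊆ N)
    (hiff : ∀ N A C k W, f N A C k W ↔ ∀ N', ¬ w N A C k W N')
    (hemb : ∀ N A C k W N' N₂ A₂ C₂ W₂ N₂',
      w N A C k W N' → N₂.card = N.card → N₂' ⊆ N₂ →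
      LocallyEmbeds N' A W N₂' A₂ W₂ → w N₂ A₂ C₂ k W₂ N₂')
    (hcoh : ∀ N A C k W N', w N A C k W N' → ∃ c, c ∉ W ∧ ∀ i ∈ N', c ∈ A i)
    (hLQE : ∀ N A C k P W, IsPartyList N C A P → N.Nonempty → W ⊆ C → W.card = k →
      (f N A C k W ↔ LowerQuota N A k P W))
    (hmp : ∀ N A C k W N' A', w N A C k W N' →
      (∀ i, i ∉ N' → A' i = A i) →
      (∀ i ∈ N', A i ⊆ A' i ∧ A' i ⊆ N'.biUnion A) →
      w N A' C k W N') :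
    ∀ N A C k W, N.Nonempty → (∀ i ∈ N, A i ⊆ C) → W ⊆ C → W.card = k →
      PJRplus N A k W → f N A C k W := by
  intro N A C k W hN _ _ hWk hPJR
  rw [hiff]
  intro N' hw
  obtain ⟨⟨i₀, hi₀⟩, hN'⟩ := hval N A C k W N' hw
  obtain ⟨c, hcW, hcA⟩ := hcoh N A C k W N' hw
  set U := N'.biUnion A
  have hU : U.Nonempty := ⟨c, mem_biUnion.mpr ⟨i₀, hi₀, hcA i₀ hi₀⟩⟩
  have hmerged : w N (fun i => if i ∈ N' then U else A i) C k W N' :=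
    hmp N A C k W N' _ hw (fun i hi => if_neg hi)
      (fun i hi => by simpa [hi, U] using subset_biUnion_of_mem A hi)
  obtain ⟨C₂, A₂, P, hPL, hWC₂, hLQ, hA₂⟩ := exists_partyList_lowerQuota hN' hU hWk
    (hPJR.div_le_card_inter_biUnion hN' hcW hcA)
  have hw₂ : w N A₂ C₂ k W N' := hemb N _ C k W N' N A₂ C₂ W N' hmerged rfl hN'
    (locallyEmbeds_self_of_eqOn fun i hi => (if_pos hi).trans (hA₂ i hi).symm)
  exact ((hiff N A₂ C₂ k W).mp ((hLQE N A₂ C₂ k P W hPL hN hWC₂ hWk).mpr hLQ)) N' hw₂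
end
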